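/- The function g(ω) = 1 − h(1/2 + (1/2)√(16ω(ω−1)+3)) on ω ∈ (3/4, (2+√2)/4) is convex, so for every tangent point ω_t in this interval, the affine function F(ω) = g(ω_t) + g′(ω_t)(ω − ω_t) satisfies F(ω) ≤ g(ω) for all ω in the interval. -/

import Mathlib

open Real

/-- Binary entropy h(p) = −p log₂ p − (1−p) log₂(1−p). -/
noncomputable def binEnt2 (p : ℝ) : ℝ :=
  -(p * Real.logb 2 p) - (1 - p) * Real.logb 2 (1 - p)

/-- g(ω) = 1 − h(1/2 + (1/2)√(16ω(ω−1)+3)). -/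
noncomputable def gFun (ω : ℝ) : ℝ :=
  1 - binEnt2 (1 / 2 + (1 / 2) * sqrt (16 * ω * (ω - 1) + 3))

lemma key_ineq {s : ℝ} (h0 : 0 ≤ s) (h1 : s < 1) :
    Real.log (1 + s) - Real.log (1 - s) ≤ 2 * s / (1 - s ^ 2) := by
  set M : ℝ → ℝ := fun y => 2 * y / (1 - y ^ 2) - (Real.log (1 + y) - Real.log (1 - y)) with hMdef
  have hD : ∀ y ∈ Set.Icc (0:ℝ) s, HasDerivAt M
      ((2 * (1 - y ^ 2) - 2 * y * (-(2 * y ^ 1))) / (1 - y ^ 2) ^ 2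
        - (1 / (1 + y) - (-1) / (1 - y))) y := by
    intro y hy
    have hy1 : (0:ℝ) < 1 + y := by linarith [hy.1]
    have hy2 : (0:ℝ) < 1 - y := by linarith [hy.2, h1]
    have hden : (1 - y ^ 2) ≠ 0 := by nlinarith [hy.1, hy.2]
    have d1 : HasDerivAt (fun y : ℝ => 2 * y) 2 y := by
      simpa using (hasDerivAt_id y).const_mul (2:ℝ)
    have d2 : HasDerivAt (fun y : ℝ => 1 - y ^ 2) (-(2 * y ^ 1)) y := by
      simpa using (hasDerivAt_pow 2 y).const_sub 1
    have d3 := d1.div d2 hden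
    have d4 : HasDerivAt (fun y : ℝ => Real.log (1 + y)) (1 / (1 + y)) y := by
      simpa using ((hasDerivAt_id y).const_add (1:ℝ)).log hy1.ne'
    have d5 : HasDerivAt (fun y : ℝ => Real.log (1 - y)) ((-1) / (1 - y)) y := by
      simpa using ((hasDerivAt_id y).const_sub (1:ℝ)).log hy2.ne'
    exact d3.sub (d4.sub d5)
  have hmono : MonotoneOn M (Set.Icc 0 s) := by
    apply monotoneOn_of_deriv_nonneg (convex_Icc 0 s)
    · exact fun y hy => ((hD y hy).continuousAt).continuousWithinAt
    · intro y hy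
      rw [interior_Icc] at hy
      exact ((hD y (Set.mem_Icc_of_Ioo hy)).differentiableAt).differentiableWithinAt
    · intro y hy
      rw [interior_Icc] at hy
      rw [(hD y (Set.mem_Icc_of_Ioo hy)).deriv]
      have hy1 : (0:ℝ) < 1 + y := by linarith [hy.1]
      have hy2 : (0:ℝ) < 1 - y := by linarith [hy.2, h1]
      have hden : (0:ℝ) < 1 - y ^ 2 := by nlinarith
      have e1 : 1 / (1 + y) - (-1) / (1 - y) = 2 / (1 - y ^ 2) := by
        field_simp
        ring
      rw [e1, sub_nonneg, div_le_div_iff₀ hden (by positivity)]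
      nlinarith [sq_nonneg y, sq_nonneg (1 - y ^ 2)]
  have h0' : M 0 ≤ M s := hmono (Set.left_mem_Icc.2 h0) (Set.right_mem_Icc.2 h0) h0
  have hM0 : M 0 = 0 := by simp [hMdef]
  rw [hM0] at h0'
  simp only [hMdef] at h0'
  linarith

lemma hasDerivAt_binEnt2 {p : ℝ} (h0 : 0 < p) (h1 : p < 1) :
    HasDerivAt binEnt2 ((Real.log (1 - p) - Real.log p) / Real.log 2) p := by
  have h1' : (0:ℝ) < 1 - p := by linarith
  have d1 : HasDerivAt (fun x : ℝ => x * Real.log x) (Real.log p + 1) p :=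
    Real.hasDerivAt_mul_log h0.ne'
  have d2 : HasDerivAt (fun x : ℝ => (1 - x) * Real.log (1 - x))
      ((Real.log (1 - p) + 1) * (-1)) p := by
    have := (Real.hasDerivAt_mul_log h1'.ne').comp p ((hasDerivAt_id p).const_sub 1)
    simpa [Function.comp_def] using this
  have dF : HasDerivAt (fun x : ℝ => -(x * Real.log x) - (1 - x) * Real.log (1 - x))
      (-(Real.log p + 1) - (Real.log (1 - p) + 1) * (-1)) p := d1.neg.sub d2
  have hEq : binEnt2 = fun x : ℝ =>
      (-(x * Real.log x) - (1 - x) * Real.log (1 - x)) / Real.log 2 := by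
    funext x
    simp only [binEnt2, Real.logb]
    ring
  rw [hEq]
  refine (dF.div_const (Real.log 2)).congr_deriv ?_
  ring

/-- derivative of the inner sqrt map -/
lemma hasDerivAt_sqrtA {ω : ℝ} (hA : 0 < 16 * ω * (ω - 1) + 3) :
    HasDerivAt (fun x : ℝ => sqrt (16 * x * (x - 1) + 3))
      ((32 * ω - 16) / (2 * sqrt (16 * ω * (ω - 1) + 3))) ω := by
  have hA' : HasDerivAt (fun x : ℝ => 16 * x * (x - 1) + 3) (32 * ω - 16) ω := by
    have h := (((hasDerivAt_id ω).const_mul (16:ℝ)).mul ((hasDerivAt_id ω).sub_const 1)).add_const 3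
    refine h.congr_deriv ?_
    simp [id]
    ring
  exact hA'.sqrt hA.ne'

noncomputable def g1 (ω : ℝ) : ℝ :=
  (Real.log (1 + sqrt (16 * ω * (ω - 1) + 3)) - Real.log (1 - sqrt (16 * ω * (ω - 1) + 3)))
    * ((8 * ω - 4) / sqrt (16 * ω * (ω - 1) + 3)) / Real.log 2

lemma hasDerivAt_gFun {ω : ℝ} (hA : 0 < 16 * ω * (ω - 1) + 3)
    (hs1 : sqrt (16 * ω * (ω - 1) + 3) < 1) :
    HasDerivAt gFun (g1 ω) ω := by
  set s := sqrt (16 * ω * (ω - 1) + 3) with hs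
  have hs0 : 0 < s := Real.sqrt_pos.2 hA
  have hp0 : (0:ℝ) < 1 / 2 + 1 / 2 * s := by linarith
  have hp1 : 1 / 2 + 1 / 2 * s < 1 := by linarith
  have hq : HasDerivAt (fun x : ℝ => 1 / 2 + 1 / 2 * sqrt (16 * x * (x - 1) + 3))
      (1 / 2 * ((32 * ω - 16) / (2 * s))) ω := by
    simpa using ((hasDerivAt_sqrtA hA).const_mul (1/2:ℝ)).const_add (1/2:ℝ)
  have hb := hasDerivAt_binEnt2 hp0 hp1
  have hcomp := (hb.comp ω hq).const_sub 1
  have hg : HasDerivAt gFun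
      (-((Real.log (1 - (1 / 2 + 1 / 2 * s)) - Real.log (1 / 2 + 1 / 2 * s)) / Real.log 2 *
        (1 / 2 * ((32 * ω - 16) / (2 * s))))) ω := by
    exact hcomp
  have e1 : Real.log (1 / 2 + 1 / 2 * s) = Real.log (1 + s) - Real.log 2 := by
    rw [show (1 / 2 + 1 / 2 * s : ℝ) = (1 + s) / 2 by ring,
      Real.log_div (by linarith) two_ne_zero]
  have e2 : Real.log (1 - (1 / 2 + 1 / 2 * s)) = Real.log (1 - s) - Real.log 2 := by
    rw [show (1 - (1 / 2 + 1 / 2 * s) : ℝ) = (1 - s) / 2 by ring,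
      Real.log_div (by linarith) two_ne_zero]
  convert hg using 1
  rw [e1, e2, g1, ← hs]
  field_simp
  ring

noncomputable def g2 (ω : ℝ) : ℝ :=
  (((32 * ω - 16) / (2 * sqrt (16 * ω * (ω - 1) + 3)) / (1 + sqrt (16 * ω * (ω - 1) + 3))
      - (-((32 * ω - 16) / (2 * sqrt (16 * ω * (ω - 1) + 3)))) / (1 - sqrt (16 * ω * (ω - 1) + 3)))
      * ((8 * ω - 4) / sqrt (16 * ω * (ω - 1) + 3))
    + (Real.log (1 + sqrt (16 * ω * (ω - 1) + 3)) - Real.log (1 - sqrt (16 * ω * (ω - 1) + 3)))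
      * ((8 * sqrt (16 * ω * (ω - 1) + 3) - (8 * ω - 4) * ((32 * ω - 16) / (2 * sqrt (16 * ω * (ω - 1) + 3))))
        / sqrt (16 * ω * (ω - 1) + 3) ^ 2)) / Real.log 2

lemma hasDerivAt_g1 {ω : ℝ} (hA : 0 < 16 * ω * (ω - 1) + 3)
    (hs1 : sqrt (16 * ω * (ω - 1) + 3) < 1) :
    HasDerivAt g1 (g2 ω) ω := by
  set s := sqrt (16 * ω * (ω - 1) + 3) with hs
  have hs0 : 0 < s := Real.sqrt_pos.2 hA
  have hds := hasDerivAt_sqrtA hA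
  have d4 : HasDerivAt (fun x : ℝ => Real.log (1 + sqrt (16 * x * (x - 1) + 3)))
      ((32 * ω - 16) / (2 * s) / (1 + s)) ω := by
    simpa using (hds.const_add (1:ℝ)).log (by rw [← hs]; positivity)
  have d5 : HasDerivAt (fun x : ℝ => Real.log (1 - sqrt (16 * x * (x - 1) + 3)))
      ((-((32 * ω - 16) / (2 * s))) / (1 - s)) ω := by
    simpa using (hds.const_sub (1:ℝ)).log (by rw [← hs]; intro h; nlinarith)
  have d6 : HasDerivAt (fun x : ℝ => (8 * x - 4)) (8:ℝ) ω := by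
    simpa using ((hasDerivAt_id ω).const_mul (8:ℝ)).sub_const 4
  have d7 := d6.div hds (by rw [← hs]; exact hs0.ne')
  exact ((d4.sub d5).mul d7).div_const (Real.log 2)

lemma g2_nonneg {ω : ℝ} (hA : 0 < 16 * ω * (ω - 1) + 3)
    (hs1 : sqrt (16 * ω * (ω - 1) + 3) < 1) : 0 ≤ g2 ω := by
  set s := sqrt (16 * ω * (ω - 1) + 3) with hs
  have hs0 : 0 < s := Real.sqrt_pos.2 hA
  have hs2 : s ^ 2 = 16 * ω * (ω - 1) + 3 := Real.sq_sqrt hA.le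
  have e1 : (8 * ω - 4) ^ 2 = 4 * (s ^ 2 + 1) := by rw [hs2]; ring
  have hden : (0:ℝ) < 1 - s ^ 2 := by nlinarith
  have h1s : (0:ℝ) < 1 + s := by linarith
  have h2s : (0:ℝ) < 1 - s := by linarith
  have hne : s ≠ 0 := hs0.ne'
  have hne1 : (1:ℝ) + s ≠ 0 := h1s.ne'
  have hne2 : (1:ℝ) - s ≠ 0 := h2s.ne'
  have hT1 : ((32 * ω - 16) / (2 * s) / (1 + s)
      - (-((32 * ω - 16) / (2 * s))) / (1 - s)) * ((8 * ω - 4) / s)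
      = 16 * (s ^ 2 + 1) / (s ^ 2 * (1 - s ^ 2)) := by
    have h : ((32 * ω - 16) / (2 * s) / (1 + s)
        - (-((32 * ω - 16) / (2 * s))) / (1 - s)) * ((8 * ω - 4) / s)
        = 4 * (8 * ω - 4) ^ 2 / (s ^ 2 * (1 - s ^ 2)) := by
      field_simp
      ring
    rw [h, e1]; ring
  have hT2 : (8 * s - (8 * ω - 4) * ((32 * ω - 16) / (2 * s))) / s ^ 2 = -8 / s ^ 3 := by
    have h : (8 * ω - 4) * ((32 * ω - 16) / (2 * s)) = 2 * (8 * ω - 4) ^ 2 / s := by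
      field_simp; ring
    rw [h, e1]
    field_simp
    ring
  unfold g2
  rw [← hs, hT1, hT2]
  apply div_nonneg _ (Real.log_nonneg one_le_two)
  have hL0 : 0 ≤ Real.log (1 + s) - Real.log (1 - s) := by
    have := Real.log_le_log (by linarith : (0:ℝ) < 1 - s) (by linarith : (1:ℝ) - s ≤ 1 + s)
    linarith
  have hkey := key_ineq hs0.le hs1
  have key2 : (Real.log (1 + s) - Real.log (1 - s)) * (1 - s ^ 2) ≤ 2 * s := by
    rw [← le_div_iff₀ hden]; exact hkey
  have hmain : (Real.log (1 + s) - Real.log (1 - s)) * (8 / s ^ 3)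
      ≤ 16 * (s ^ 2 + 1) / (s ^ 2 * (1 - s ^ 2)) := by
    rw [mul_comm, div_mul_eq_mul_div, div_le_div_iff₀ (by positivity) (by positivity)]
    nlinarith [mul_le_mul_of_nonneg_left key2 (by positivity : (0:ℝ) ≤ 8 * s ^ 2),
      pow_pos hs0 3, pow_pos hs0 5, sq_nonneg s, mul_pos (pow_pos hs0 5) hden]
  have : (Real.log (1 + s) - Real.log (1 - s)) * (-8 / s ^ 3)
      = -((Real.log (1 + s) - Real.log (1 - s)) * (8 / s ^ 3)) := by ring
  linarith

lemma interval_facts {ω : ℝ} (hω : ω ∈ Set.Ioo (3 / 4 : ℝ) ((2 + sqrt 2) / 4)) :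
    0 < 16 * ω * (ω - 1) + 3 ∧ sqrt (16 * ω * (ω - 1) + 3) < 1 := by
  have h1 := hω.1
  have h2 := hω.2
  have hsq : (sqrt 2) ^ 2 = 2 := Real.sq_sqrt (by norm_num)
  have hs2pos : (0:ℝ) < sqrt 2 := Real.sqrt_pos.2 (by norm_num)
  have hA : 0 < 16 * ω * (ω - 1) + 3 := by nlinarith
  have hA1 : 16 * ω * (ω - 1) + 3 < 1 := by nlinarith
  refine ⟨hA, ?_⟩
  calc sqrt (16 * ω * (ω - 1) + 3) < sqrt 1 := Real.sqrt_lt_sqrt hA.le hA1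
    _ = 1 := Real.sqrt_one

/-- g is convex on (3/4, (2+√2)/4), so for every tangent point ω_t in
this interval the affine function F(ω) = g(ω_t) + g′(ω_t)(ω − ω_t) lies below g on
the whole interval. -/
theorem tangent_line_below_g :
    ConvexOn ℝ (Set.Ioo (3 / 4 : ℝ) ((2 + sqrt 2) / 4)) gFun ∧
    ∀ ωt ∈ Set.Ioo (3 / 4 : ℝ) ((2 + sqrt 2) / 4),
      ∀ ω ∈ Set.Ioo (3 / 4 : ℝ) ((2 + sqrt 2) / 4),
        gFun ωt + deriv gFun ωt * (ω - ωt) ≤ gFun ω := by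
  set I : Set ℝ := Set.Ioo (3 / 4 : ℝ) ((2 + sqrt 2) / 4) with hI
  have hIint : interior I = I := isOpen_Ioo.interior_eq
  have hconv : ConvexOn ℝ I gFun := by
    apply convexOn_of_hasDerivWithinAt2_nonneg (convex_Ioo _ _) (f' := g1) (f'' := g2)
    · intro x hx
      exact ((hasDerivAt_gFun (interval_facts hx).1 (interval_facts hx).2).continuousAt).continuousWithinAt
    · intro x hx
      rw [hIint] at hx
      exact (hasDerivAt_gFun (interval_facts hx).1 (interval_facts hx).2).hasDerivWithinAt
    · intro x hx
      rw [hIint] at hx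
      exact (hasDerivAt_g1 (interval_facts hx).1 (interval_facts hx).2).hasDerivWithinAt
    · intro x hx
      rw [hIint] at hx
      exact g2_nonneg (interval_facts hx).1 (interval_facts hx).2
  refine ⟨hconv, ?_⟩
  intro ωt hωt ω hω
  have hdiff : DifferentiableAt ℝ gFun ωt :=
    (hasDerivAt_gFun (interval_facts hωt).1 (interval_facts hωt).2).differentiableAt
  rcases lt_trichotomy ω ωt with hlt | heq | hgt
  · have h := hconv.slope_le_deriv hω hωt hlt hdiff
    rw [slope_def_field] at h
    have hc : 0 < ωt - ω := by linarith
    rw [div_le_iff₀ hc] at h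
    nlinarith
  · subst heq; simp
  · have h := hconv.deriv_le_slope hωt hω hgt hdiff
    rw [slope_def_field] at h
    have hc : 0 < ω - ωt := by linarith
    rw [le_div_iff₀ hc] at h
    nlinarith
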